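/- The quiver Γ^{10}_{1,2,3} of coloured oriented single and paired diagonals of a regular 10-gon is isomorphic as a stable translation quiver to Z E_7/⟨τ^{-10}⟩; this quotient is the Auslander–Reiten quiver of the cluster category C_{E_7} = D^b(mod kE_7)/τ^{-1}Σ, on which the shift Σ acts as τ^{-9}. -/

import Mathlib

/-!
Coloured oriented single and paired diagonals in a regular polygon, following
L. Lamberti, "Combinatorial model for the cluster categories of type E".

The vertices of the regular `m`-gon `Π` are labelled by `ZMod m` (clockwise).
A coloured oriented diagonal `[i,j]_c` is encoded by the structure `Diag`;
the colour `P` encodes a *paired* diagonal `[i,j]_P = {[i,j]_R, [j,i]_B}`.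
-/

inductive Colour : Type
  | R : Colour
  | B : Colour
  | P : Colour
deriving DecidableEq

/-- A coloured oriented (single or paired) diagonal `[i,j]_c` of the regular
`m`-gon (for `m = 0` we interpret `ZMod 0 = ℤ` as the infinite-sided polygon). -/
structure Diag (m : ℕ) where
  i : ZMod m
  j : ZMod m
  c : Colour
deriving DecidableEq

/-- The simultaneous change of colour and orientation:
`ρ([i,j]_R) = [j,i]_B`, `ρ([i,j]_B) = [j,i]_R`, `ρ([i,j]_P) = [i,j]_P`. -/
def rho {m : ℕ} : Diag m → Diag m
  | ⟨i, j, Colour.R⟩ => ⟨j, i, Colour.B⟩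
  | ⟨i, j, Colour.B⟩ => ⟨j, i, Colour.R⟩
  | ⟨i, j, Colour.P⟩ => ⟨i, j, Colour.P⟩

/-- The anticlockwise rotation `[i,j]_c ↦ [i-1,j-1]_c`. -/
def shiftD {m : ℕ} (d : Diag m) : Diag m := ⟨d.i - 1, d.j - 1, d.c⟩

/-- The slice of `Π_{r,s,t}` based at the vertex `i` of `Π`:
the paired diagonals `[i,i+2]_P, …, [i,i+r+2]_P`, the red single diagonals
`[i,i+r+3]_R, …, [i,i+r+s+2]_R` and the blue single diagonals
`[i+r+3,i]_B, …, [i+r+t+2,i]_B`. -/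
def PiSetAt (r s t : ℕ) {m : ℕ} (i : ZMod m) : Set (Diag m) :=
  {d | (∃ k : ℕ, 2 ≤ k ∧ k ≤ r + 2 ∧ d = ⟨i, i + (k : ZMod m), Colour.P⟩) ∨
       (∃ k : ℕ, r + 3 ≤ k ∧ k ≤ r + s + 2 ∧ d = ⟨i, i + (k : ZMod m), Colour.R⟩) ∨
       (∃ k : ℕ, r + 3 ≤ k ∧ k ≤ r + t + 2 ∧ d = ⟨i + (k : ZMod m), i, Colour.B⟩)}

/-- The set `Π_{r,s,t}` of coloured oriented single and paired diagonals of the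
regular `m`-gon associated to the tree `T_{r,s,t}`. -/
def PiSet (r s t m : ℕ) : Set (Diag m) := ⋃ i : ZMod m, PiSetAt r s t i

open Classical in
/-- The translation `τ` on coloured oriented diagonals: the anticlockwise
rotation `[i,j]_c ↦ [i-1,j-1]_c`, composed with `ρ^{m}` on the first slice
`Π_{r,s,t}|_1` when the tree is symmetric (`s = t`). -/
noncomputable def tauD (r s t : ℕ) {m : ℕ} (d : Diag m) : Diag m :=
  if s = t ∧ d ∈ PiSetAt r s t (1 : ZMod m) then rho^[m] (shiftD d) else shiftD d

/-- Minimal clockwise rotations (before the colour adjustment at the seam):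
`[k,l]_c → [k,l+1]_c`, `[k,l]_c → [k+1,l]_c`, together with
`[k,k+r+2]_P → [k,k+r+3]_R`, `[k,k+r+2]_P → [k+r+3,k]_B`,
`[k,k+r+3]_R → [k+1,k+r+3]_P` and `[k+r+3,k]_B → [k+1,k+r+3]_P`. -/
def Rot (r : ℕ) {m : ℕ} (a b : Diag m) : Prop :=
  b = ⟨a.i, a.j + 1, a.c⟩ ∨ b = ⟨a.i + 1, a.j, a.c⟩ ∨
  (∃ k : ZMod m, a = ⟨k, k + ((r : ZMod m) + 2), Colour.P⟩ ∧
    (b = ⟨k, k + ((r : ZMod m) + 3), Colour.R⟩ ∨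
     b = ⟨k + ((r : ZMod m) + 3), k, Colour.B⟩)) ∨
  (∃ k : ZMod m,
    (a = ⟨k, k + ((r : ZMod m) + 3), Colour.R⟩ ∨
     a = ⟨k + ((r : ZMod m) + 3), k, Colour.B⟩) ∧
    b = ⟨k + 1, k + ((r : ZMod m) + 3), Colour.P⟩)

/-- In the symmetric case `s = t` with an odd-sided polygon, the arrows whose
source lies in `τ(Π_{r,t,t}|_1)` and whose (unadjusted) target lies in the
first slice `Π_{r,t,t}|_1` additionally change colour and orientation. -/
def SeamTwist (r s t m : ℕ) (a b₀ : Diag m) : Prop :=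
  s = t ∧ Odd m ∧ a ∈ (tauD r s t) '' (PiSetAt r s t (1 : ZMod m)) ∧
    b₀ ∈ PiSetAt r s t (1 : ZMod m)

/-- The arrows of the quiver `Γ^{m}_{r,s,t}`: minimal clockwise rotations
between elements of `Π_{r,s,t}`, adjusted by `ρ` at the seam. -/
def ArrowD (r s t m : ℕ) (a b : Diag m) : Prop :=
  a ∈ PiSet r s t m ∧ b ∈ PiSet r s t m ∧
    ∃ b₀, Rot r a b₀ ∧
      ((SeamTwist r s t m a b₀ ∧ b = rho b₀) ∨ (¬ SeamTwist r s t m a b₀ ∧ b = b₀))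

/-- The vertices of the tree `T_{r,s,t}`: a central vertex together with three
legs having `r`, `s`, `t` vertices respectively. -/
inductive TVert (r s t : ℕ) : Type
  | center : TVert r s t
  | legA : Fin r → TVert r s t
  | legB : Fin s → TVert r s t
  | legC : Fin t → TVert r s t
deriving DecidableEq

/-- An orientation of the tree `T_{r,s,t}`: the `A`-leg points towards the
centre, the `B`- and `C`-legs point away from it. -/
def TArrow {r s t : ℕ} (x y : TVert r s t) : Prop :=
  (∃ k l : Fin r, (l : ℕ) + 1 = (k : ℕ) ∧ x = TVert.legA k ∧ y = TVert.legA l) ∨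
  (∃ k : Fin r, (k : ℕ) = 0 ∧ x = TVert.legA k ∧ y = TVert.center) ∨
  (∃ k : Fin s, (k : ℕ) = 0 ∧ x = TVert.center ∧ y = TVert.legB k) ∨
  (∃ k l : Fin s, (k : ℕ) + 1 = (l : ℕ) ∧ x = TVert.legB k ∧ y = TVert.legB l) ∨
  (∃ k : Fin t, (k : ℕ) = 0 ∧ x = TVert.center ∧ y = TVert.legC k) ∨
  (∃ k l : Fin t, (k : ℕ) + 1 = (l : ℕ) ∧ x = TVert.legC k ∧ y = TVert.legC l)

/-- The order-two graph automorphism of a symmetric tree `T_{r,t,t}`,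
exchanging its two legs of length `t`. -/
def treeRho {r t : ℕ} : TVert r t t → TVert r t t
  | TVert.center => TVert.center
  | TVert.legA k => TVert.legA k
  | TVert.legB k => TVert.legC k
  | TVert.legC k => TVert.legB k

/-- `treeRho` as a permutation. -/
def treeRhoPerm (r t : ℕ) : Equiv.Perm (TVert r t t) :=
  Function.Involutive.toPerm treeRho (by intro x; cases x <;> rfl)

/-- The translation of the repetitive quiver `ℤQ`: `τ(m,i) = (m-1,i)`. -/
def ZTau {V : Type} (x : ℤ × V) : ℤ × V := (x.1 - 1, x.2)

/-- The arrows of the repetitive quiver `ℤQ` of a quiver with arrow relation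
`A`: for each arrow `i → j` of `Q` there are arrows `(m,i) → (m,j)` and
`(m,j) → (m+1,i)`. -/
def ZArrow {V : Type} (A : V → V → Prop) (x y : ℤ × V) : Prop :=
  (y.1 = x.1 ∧ A x.2 y.2) ∨ (y.1 = x.1 + 1 ∧ A y.2 x.2)

/-- The automorphism `τ^{-m} σ` of `ℤQ` given by shifting `m` steps to the
right and applying the graph automorphism `σ` of `Q`. -/
def shiftPerm {V : Type} (m : ℕ) (σ : Equiv.Perm V) : Equiv.Perm (ℤ × V) :=
  (Equiv.addRight (m : ℤ)).prodCongr σ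

/-- `φ` exhibits the quiver `Γ^{m}_{r,s,t}` (with vertex set `PiSet r s t m`,
arrow relation `ArrowD` and translation `tauD`) as the quotient of the
repetitive quiver `ℤQ` (with arrow relation `ZArrow A` and translation `ZTau`)
by the cyclic group generated by the automorphism `g`, as stable translation
quivers: `φ` is surjective onto the vertex set, its fibres are exactly the
`g`-orbits, it commutes with the translations, and the arrows of
`Γ^{m}_{r,s,t}` correspond exactly to the `g`-orbits of arrows of `ℤQ`. -/
def IsQuotientIso (r s t m : ℕ) {V : Type} (A : V → V → Prop)
    (g : Equiv.Perm (ℤ × V)) (φ : ℤ × V → Diag m) : Prop :=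
  (∀ x, φ x ∈ PiSet r s t m) ∧
  (∀ d ∈ PiSet r s t m, ∃ x, φ x = d) ∧
  (∀ x y, φ x = φ y ↔ ∃ k : ℤ, (g ^ k) x = y) ∧
  (∀ x, φ (ZTau x) = tauD r s t (φ x)) ∧
  (∀ x y, ArrowD r s t m (φ x) (φ y) ↔
    ∃ y', (∃ k : ℤ, (g ^ k) y = y') ∧ ZArrow A x y')

/-! Each slice `Π_{1,2,3}|_i` is a copy of the vertex set of `E₇ = T_{1,2,3}`: the leg of
length 1 is `[i,i+2]_P`, the centre `[i,i+3]_P`, the leg of length 2 the red diagonals and the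
leg of length 3 the blue ones. Sending `(n, v) ∈ ℤE₇` to the diagonal labelled `v` in the slice
at `n mod 10` therefore identifies `ℤE₇/⟨τ^{-10}⟩` with `Π_{1,2,3}` as sets. As `s ≠ t` there is
no colour twist, so `τ` is the rotation `[i,j] ↦ [i-1,j-1]`, matching `(n, v) ↦ (n - 1, v)`, and
a finite check on the 10-gon shows that the minimal clockwise rotations between two slices are
exactly the arrows of `ℤE₇` inside a slice and from one slice to the next. -/

section RepetitiveQuiver

variable {V : Type}

lemma shiftPerm_one_zpow_apply (m : ℕ) (k : ℤ) (x : ℤ × V) :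
    (shiftPerm m (1 : Equiv.Perm V) ^ k) x = (x.1 + k * m, x.2) := by
  let prodCongrOne : Equiv.Perm ℤ →* Equiv.Perm (ℤ × V) :=
    MonoidHom.mk' (fun e => e.prodCongr 1) fun _ _ => rfl
  have : shiftPerm m (1 : Equiv.Perm V) = prodCongrOne (Equiv.addRight (m : ℤ)) := rfl
  rw [this, ← map_zpow, Equiv.zsmul_addRight]
  rfl

lemma exists_shiftPerm_zpow_eq_iff (m : ℕ) (x y : ℤ × V) :
    (∃ k : ℤ, (shiftPerm m (1 : Equiv.Perm V) ^ k) x = y) ↔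
      (x.1 : ZMod m) = y.1 ∧ x.2 = y.2 := by
  simp only [shiftPerm_one_zpow_apply, Prod.ext_iff, ZMod.intCast_eq_intCast_iff_dvd_sub]
  constructor
  · rintro ⟨k, hk, h2⟩
    exact ⟨⟨k, by rw [← hk]; ring⟩, h2⟩
  · rintro ⟨⟨k, hk⟩, h2⟩
    exact ⟨k, by linarith, h2⟩

lemma exists_shiftPerm_zpow_zArrow_iff (m : ℕ) (A : V → V → Prop) (x y : ℤ × V) :
    (∃ y', (∃ k : ℤ, (shiftPerm m (1 : Equiv.Perm V) ^ k) y = y') ∧ ZArrow A x y') ↔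
      ((y.1 : ZMod m) = x.1 ∧ A x.2 y.2) ∨ ((y.1 : ZMod m) = x.1 + 1 ∧ A y.2 x.2) := by
  simp only [exists_shiftPerm_zpow_eq_iff, ZArrow]
  constructor
  · rintro ⟨y', ⟨h1, h2⟩, (⟨e, hA⟩ | ⟨e, hA⟩)⟩
    · exact Or.inl ⟨by rw [h1, e], h2 ▸ hA⟩
    · exact Or.inr ⟨by rw [h1, e]; push_cast; rfl, h2 ▸ hA⟩
  · rintro (⟨h, hA⟩ | ⟨h, hA⟩)
    · exact ⟨(x.1, y.2), ⟨h, rfl⟩, Or.inl ⟨rfl, hA⟩⟩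
    · exact ⟨(x.1 + 1, y.2), ⟨by push_cast; exact h, rfl⟩, Or.inr ⟨rfl, hA⟩⟩

end RepetitiveQuiver

section AsymmetricTree

variable {r s t m : ℕ}

lemma tauD_of_ne (hst : s ≠ t) (d : Diag m) : tauD r s t d = shiftD d :=
  if_neg fun h => hst h.1

lemma arrowD_iff_of_ne (hst : s ≠ t) (a b : Diag m) :
    ArrowD r s t m a b ↔ a ∈ PiSet r s t m ∧ b ∈ PiSet r s t m ∧ Rot r a b := by
  have noTwist : ∀ b₀, ¬ SeamTwist r s t m a b₀ := fun _ h => hst h.1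
  simp only [ArrowD, noTwist, false_and, not_false_eq_true, true_and, false_or,
    exists_eq_right']

end AsymmetricTree

instance (r s t : ℕ) : Fintype (TVert r s t) :=
  Fintype.ofEquiv (Unit ⊕ Fin r ⊕ Fin s ⊕ Fin t)
    { toFun := fun
        | .inl _ => .center
        | .inr (.inl k) => .legA k
        | .inr (.inr (.inl k)) => .legB k
        | .inr (.inr (.inr k)) => .legC k
      invFun := fun
        | .center => .inl ()
        | .legA k => .inr (.inl k)
        | .legB k => .inr (.inr (.inl k))
        | .legC k => .inr (.inr (.inr k))
      left_inv := by rintro (_ | _ | _ | _) <;> rfl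
      right_inv := by rintro (_ | _ | _ | _) <;> rfl }

instance {r s t : ℕ} (x y : TVert r s t) : Decidable (TArrow x y) := by
  unfold TArrow; infer_instance

instance (r : ℕ) {m : ℕ} [NeZero m] (a b : Diag m) : Decidable (Rot r a b) := by
  unfold Rot; infer_instance

def e7Slice {m : ℕ} (i : ZMod m) : TVert 1 2 3 → Diag m
  | .center => ⟨i, i + (3 : ℕ), .P⟩
  | .legA _ => ⟨i, i + (2 : ℕ), .P⟩
  | .legB k => ⟨i, i + (k + 4 : ℕ), .R⟩
  | .legC k => ⟨i + (k + 4 : ℕ), i, .B⟩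

lemma range_e7Slice {m : ℕ} (i : ZMod m) : Set.range (e7Slice i) = PiSetAt 1 2 3 i := by
  ext d
  constructor
  · rintro ⟨v, rfl⟩
    rcases v with _ | k | k | k
    exacts [Or.inl ⟨3, by norm_num, by norm_num, rfl⟩, Or.inl ⟨2, by norm_num, by norm_num, rfl⟩,
      Or.inr (Or.inl ⟨k + 4, by omega, by omega, rfl⟩),
      Or.inr (Or.inr ⟨k + 4, by omega, by omega, rfl⟩)]
  · rintro (⟨k, hk₁, hk₂, rfl⟩ | ⟨k, hk₁, hk₂, rfl⟩ | ⟨k, hk₁, hk₂, rfl⟩)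
    · interval_cases k
      exacts [⟨.legA 0, rfl⟩, ⟨.center, rfl⟩]
    · exact ⟨.legB ⟨k - 4, by omega⟩, by simp [e7Slice, Nat.sub_add_cancel hk₁]⟩
    · exact ⟨.legC ⟨k - 4, by omega⟩, by simp [e7Slice, Nat.sub_add_cancel hk₁]⟩

lemma piSet_eq_range_e7Slice (m : ℕ) :
    PiSet 1 2 3 m = Set.range fun x : ℤ × TVert 1 2 3 => e7Slice (x.1 : ZMod m) x.2 := by
  ext d
  simp only [PiSet, ← range_e7Slice, Set.mem_iUnion, Set.mem_range, Prod.exists,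
    ZMod.intCast_surjective.exists]

lemma shiftD_e7Slice {m : ℕ} (i : ZMod m) (v : TVert 1 2 3) :
    shiftD (e7Slice i v) = e7Slice (i - 1) v := by
  cases v <;> simp only [shiftD, e7Slice, Diag.mk.injEq, and_true, true_and] <;> ring

lemma e7Slice_inj_iff (i j : ZMod 10) (u v : TVert 1 2 3) :
    e7Slice i u = e7Slice j v ↔ i = j ∧ u = v := by
  revert i j u v; decide +kernel

lemma rot_e7Slice_iff (i j : ZMod 10) (u v : TVert 1 2 3) :
    Rot 1 (e7Slice i u) (e7Slice j v) ↔ (j = i ∧ TArrow u v) ∨ (j = i + 1 ∧ TArrow v u) := by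
  revert i j u v; decide +kernel

/-- Theorem 4.2 for `E₇`. The quiver `Γ^{10}_{1,2,3}` of
coloured oriented single and paired diagonals of a regular 10-gon is
isomorphic, as a stable translation quiver, to `ℤ E₇ / ⟨τ^{-10}⟩`, where
`E₇ = T_{1,2,3}`.  (This quotient is the AR-quiver of the cluster category
`C_{E₇} = D^b(mod k E₇)/τ^{-1}Σ`, on which `Σ` acts as `τ^{-9}`.) -/
theorem gamma_10gon_iso_ZE7_quotient :
    ∃ φ : ℤ × TVert 1 2 3 → Diag 10,
      IsQuotientIso 1 2 3 10 TArrow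
        (shiftPerm 10 (1 : Equiv.Perm (TVert 1 2 3))) φ := by
  have hst : (2 : ℕ) ≠ 3 := by decide
  have mem : ∀ x : ℤ × TVert 1 2 3, e7Slice (x.1 : ZMod 10) x.2 ∈ PiSet 1 2 3 10 := fun x =>
    piSet_eq_range_e7Slice 10 ▸ Set.mem_range_self x
  refine ⟨fun x => e7Slice (x.1 : ZMod 10) x.2, mem, fun d hd => ?_, fun x y => ?_,
    fun x => ?_, fun x y => ?_⟩
  · rwa [piSet_eq_range_e7Slice] at hd
  · rw [exists_shiftPerm_zpow_eq_iff, e7Slice_inj_iff]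
  · simp only [ZTau, tauD_of_ne hst, shiftD_e7Slice, Int.cast_sub, Int.cast_one]
  · simp only [arrowD_iff_of_ne hst, mem, true_and, rot_e7Slice_iff,
      exists_shiftPerm_zpow_zArrow_iff]
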